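/- The group PSL_2(Z) is isomorphic to the free product Z/2 * Z/3. -/

import Mathlib

/-!
`PSL₂(ℤ)` is generated by the images of `S` and `T * S`, which have orders 2 and 3 (their
squares and cubes are `-1` in `SL₂(ℤ)`), so `ℤ/2 ∗ ℤ/3` maps onto it. Injectivity is the
ping-pong lemma for the Möbius action on `ℝ ∪ {∞}`: `S` (`x ↦ -1/x`) sends the positive reals
to the negative ones, while `T * S` (`x ↦ 1 - 1/x`) and its square send the negative reals to
the positive ones.
-/

open Function Cardinal Pointwise

namespace Monoid.Coprod

universe u

variable {M N : Type u} [Group M] [Group N]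

instance instGroupCond : ∀ b : Bool, Group (cond b M N)
  | true => ‹Group M›
  | false => ‹Group N›

def toCoprodI : M ∗ N →* CoprodI (fun b : Bool => cond b M N) :=
  lift (CoprodI.of (M := fun b : Bool => cond b M N) (i := true))
    (CoprodI.of (M := fun b : Bool => cond b M N) (i := false))

def ofCoprodI : CoprodI (fun b : Bool => cond b M N) →* M ∗ N :=
  CoprodI.lift fun
    | true => inl
    | false => inr

theorem ofCoprodI_comp_toCoprodI :
    (ofCoprodI : CoprodI (fun b : Bool => cond b M N) →* M ∗ N).comp toCoprodI = .id _ :=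
  hom_ext (by ext; simp [toCoprodI, ofCoprodI]) (by ext; simp [toCoprodI, ofCoprodI])

theorem toCoprodI_injective : Injective (toCoprodI : M ∗ N →* _) :=
  LeftInverse.injective (g := ofCoprodI) (DFunLike.congr_fun ofCoprodI_comp_toCoprodI)

theorem lift_injective_of_ping_pong {G α : Type*} [Group G] [MulAction G α]
    (f : M →* G) (g : N →* G) (hN : 3 ≤ #N) (X Y : Set α) (hX : X.Nonempty) (hY : Y.Nonempty)
    (hXY : Disjoint X Y) (hf : ∀ m ≠ 1, f m • Y ⊆ X) (hg : ∀ n ≠ 1, g n • X ⊆ Y) :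
    Injective (lift f g) := by
  let F : ∀ b, cond b M N →* G := fun
    | true => f
    | false => g
  have hF : lift f g = (CoprodI.lift F).comp toCoprodI :=
    hom_ext (by ext; simp [toCoprodI, F]) (by ext; simp [toCoprodI, F])
  rw [hF, MonoidHom.coe_comp]
  refine (CoprodI.lift_injective_of_ping_pong F (.inr ⟨false, hN⟩) (fun b => cond b X Y)
    (by rintro (_ | _) <;> assumption) ?_ ?_).comp toCoprodI_injective
  · rintro (_ | _) (_ | _) h <;> first | exact absurd rfl h | exact hXY | exact hXY.symm
  · rintro (_ | _) (_ | _) h <;> first | exact absurd rfl h | exact hf | exact hg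

end Monoid.Coprod

section CyclicHom

variable {G : Type*} [Group G]

def zmodPowersHom (n : ℕ) (a : G) (ha : a ^ n = 1) : Multiplicative (ZMod n) →* G :=
  AddMonoidHom.toMultiplicativeLeft <|
    ZMod.lift n ⟨zmultiplesHom (Additive G) (.ofMul a), by simp [← ofMul_pow, ha]⟩

theorem zmodPowersHom_ofAdd_natCast (n : ℕ) (a : G) (ha : a ^ n = 1) (k : ℕ) :
    zmodPowersHom n a ha (.ofAdd k) = a ^ k := by
  rw [zmodPowersHom, AddMonoidHom.coe_toMultiplicativeLeft, comp_apply, comp_apply, toAdd_ofAdd,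
    ← Int.cast_natCast (R := ZMod n) k, ZMod.lift_coe]
  simp

theorem exists_zmodPowersHom_eq_pow {n : ℕ} [NeZero n] (a : G) (ha : a ^ n = 1)
    {m : Multiplicative (ZMod n)} (hm : m ≠ 1) :
    ∃ k, 0 < k ∧ k < n ∧ zmodPowersHom n a ha m = a ^ k := by
  refine ⟨m.toAdd.val, ?_, ZMod.val_lt _, ?_⟩
  · rw [Nat.pos_iff_ne_zero, Ne, ZMod.val_eq_zero]
    exact hm
  · rw [← zmodPowersHom_ofAdd_natCast, ZMod.natCast_zmod_val, ofAdd_toAdd]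

end CyclicHom

open Matrix MatrixGroups ModularGroup OnePoint SpecialLinearGroup Set

theorem OnePoint.smul_eq_self_of_mem_center {K : Type*} [Field K] [DecidableEq K]
    {g : GL (Fin 2) K} (hg : g ∈ Subgroup.center (GL (Fin 2) K)) (x : OnePoint K) : g • x = x := by
  obtain ⟨r, hr⟩ := GeneralLinearGroup.mem_center_iff_val_mem_range_scalar.mp hg
  have hr0 : r ≠ 0 := by
    rintro rfl
    simpa [← hr] using g.det_ne_zero
  cases x with
  | infty => exact smul_infty_eq_self_iff.mpr (by simp [← hr])
  | coe k => simp [smul_some_eq_ite, ← hr, hr0]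

theorem Matrix.SpecialLinearGroup.mapGL_mem_center {n R S : Type*} [Fintype n] [DecidableEq n]
    [CommRing R] [CommRing S] [Algebra R S] {g : SpecialLinearGroup n R}
    (hg : g ∈ Subgroup.center (SpecialLinearGroup n R)) :
    mapGL S g ∈ Subgroup.center (GL n S) := by
  obtain ⟨r, -, hr⟩ := Matrix.SpecialLinearGroup.mem_center_iff.mp hg
  refine GeneralLinearGroup.mem_center_iff_val_mem_range_scalar.mpr ⟨algebraMap R S r, ?_⟩
  ext i j
  by_cases h : i = j <;> simp [← hr, h]

local notation "PSL₂(ℤ)" => SL(2, ℤ) ⧸ Subgroup.center SL(2, ℤ)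

noncomputable def psl2zMoebius : PSL₂(ℤ) →* Equiv.Perm (OnePoint ℝ) :=
  QuotientGroup.lift _ ((MulAction.toPermHom _ _).comp (mapGL ℝ)) fun _ hg =>
    Equiv.ext (smul_eq_self_of_mem_center (mapGL_mem_center hg))

namespace ModularGroup

theorem mapGL_S_smul_coe {k : ℝ} (hk : k ≠ 0) : mapGL ℝ S • (k : OnePoint ℝ) = ↑(-k⁻¹) := by
  simp [smul_some_eq_ite, hk, div_eq_mul_inv]

theorem mapGL_T_smul_coe (k : ℝ) : mapGL ℝ T • (k : OnePoint ℝ) = ↑(k + 1) := by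
  simp [smul_some_eq_ite]

theorem mapGL_T_mul_S_smul_coe {k : ℝ} (hk : k ≠ 0) :
    mapGL ℝ (T * S) • (k : OnePoint ℝ) = ↑(1 - k⁻¹) := by
  rw [map_mul, mul_smul, mapGL_S_smul_coe hk, mapGL_T_smul_coe, neg_add_eq_sub]

theorem S_sq : S ^ 2 = -1 := by decide

theorem T_mul_S_pow_three : (T * S) ^ 3 = -1 := by decide

theorem closure_S_T_mul_S : Subgroup.closure {S, T * S} = ⊤ := by
  rw [eq_top_iff, ← SL2Z_generators, Subgroup.closure_le]
  have hS : S ∈ Subgroup.closure {S, T * S} := Subgroup.subset_closure (by simp)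
  have hTS : T * S ∈ Subgroup.closure {S, T * S} := Subgroup.subset_closure (by simp)
  rintro _ (rfl | rfl)
  · exact hS
  · simpa using mul_mem hTS (inv_mem hS)


theorem mapGL_S_smul_Ioi :
    mapGL ℝ S • (OnePoint.some '' Ioi (0 : ℝ)) ⊆ OnePoint.some '' Iio 0 := by
  rw [smul_set_subset_iff, forall_mem_image]
  rintro k (hk : 0 < k)
  rw [mapGL_S_smul_coe (ne_of_gt hk)]
  exact mem_image_of_mem _ (neg_neg_of_pos (inv_pos.mpr hk))

theorem mapGL_T_mul_S_pow_smul_Iio {n : ℕ} (hn : 0 < n) (hn3 : n < 3) :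
    mapGL ℝ ((T * S) ^ n) • (OnePoint.some '' Iio (0 : ℝ)) ⊆ OnePoint.some '' Ioi 0 := by
  rw [smul_set_subset_iff, forall_mem_image]
  rintro k (hk : k < 0)
  have hk' : 1 < 1 - k⁻¹ := by linarith [inv_neg''.mpr hk]
  interval_cases n
  · rw [pow_one, mapGL_T_mul_S_smul_coe hk.ne]
    exact mem_image_of_mem _ (zero_lt_one.trans hk')
  · rw [pow_two, map_mul, mul_smul, mapGL_T_mul_S_smul_coe hk.ne,
      mapGL_T_mul_S_smul_coe (by linarith)]
    exact mem_image_of_mem _ (sub_pos.mpr (inv_lt_one_of_one_lt₀ hk'))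

end ModularGroup

theorem Matrix.SpecialLinearGroup.neg_one_mem_center {n R : Type*} [Fintype n] [DecidableEq n]
    [CommRing R] [Fact (Even (Fintype.card n))] :
    (-1 : SpecialLinearGroup n R) ∈ Subgroup.center (SpecialLinearGroup n R) :=
  Subgroup.mem_center_iff.mpr fun g => by simp

theorem mk_S_pow_two : (S : PSL₂(ℤ)) ^ 2 = 1 := by
  rw [← QuotientGroup.mk_pow, S_sq, QuotientGroup.eq_one_iff]
  exact neg_one_mem_center

theorem mk_T_mul_S_pow_three : ((T * S : SL(2, ℤ)) : PSL₂(ℤ)) ^ 3 = 1 := by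
  rw [← QuotientGroup.mk_pow, T_mul_S_pow_three, QuotientGroup.eq_one_iff]
  exact neg_one_mem_center

noncomputable def coprodToPSL2Z :
    Monoid.Coprod (Multiplicative (ZMod 2)) (Multiplicative (ZMod 3)) →* PSL₂(ℤ) :=
  Monoid.Coprod.lift (zmodPowersHom 2 _ mk_S_pow_two) (zmodPowersHom 3 _ mk_T_mul_S_pow_three)

theorem coprodToPSL2Z_injective : Injective coprodToPSL2Z := by
  refine Injective.of_comp (f := psl2zMoebius) ?_
  rw [← MonoidHom.coe_comp, coprodToPSL2Z, Monoid.Coprod.comp_lift]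
  refine Monoid.Coprod.lift_injective_of_ping_pong _ _ (by simp)
    (OnePoint.some '' Iio (0 : ℝ)) (OnePoint.some '' Ioi (0 : ℝ)) ⟨_, -1, by norm_num, rfl⟩ ⟨_, 1, by norm_num, rfl⟩ ?_ (fun m hm => ?_) (fun m hm => ?_)
  · exact (disjoint_image_iff coe_injective).mpr Ioi_disjoint_Iio_same.symm
  · obtain ⟨k, hk0, hk2, hk⟩ := exists_zmodPowersHom_eq_pow _ mk_S_pow_two hm
    obtain rfl : k = 1 := by omega
    rw [MonoidHom.comp_apply, hk, pow_one]
    exact mapGL_S_smul_Ioi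
  · obtain ⟨k, hk0, hk3, hk⟩ := exists_zmodPowersHom_eq_pow _ mk_T_mul_S_pow_three hm
    rw [MonoidHom.comp_apply, hk, ← QuotientGroup.mk_pow]
    exact mapGL_T_mul_S_pow_smul_Iio hk0 hk3

theorem coprodToPSL2Z_surjective : Surjective coprodToPSL2Z := by
  rw [← MonoidHom.range_eq_top, eq_top_iff, ← Subgroup.map_top_of_surjective _
    (QuotientGroup.mk'_surjective (Subgroup.center SL(2, ℤ))), ← closure_S_T_mul_S,
    MonoidHom.map_closure, Subgroup.closure_le]
  rintro _ ⟨_, rfl | rfl, rfl⟩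
  · exact ⟨.inl (.ofAdd 1), zmodPowersHom_ofAdd_natCast 2 _ mk_S_pow_two 1 |>.trans (pow_one _)⟩
  · exact ⟨.inr (.ofAdd 1),
      zmodPowersHom_ofAdd_natCast 3 _ mk_T_mul_S_pow_three 1 |>.trans (pow_one _)⟩

/-- `PSL₂(ℤ)`, i.e. the quotient of `SL₂(ℤ)` by its center `{±I}`, is isomorphic to the
free product `ℤ/2 ∗ ℤ/3`. -/
theorem psl2z_iso_coprod :
    Nonempty
      ((Matrix.SpecialLinearGroup (Fin 2) ℤ ⧸
          Subgroup.center (Matrix.SpecialLinearGroup (Fin 2) ℤ)) ≃*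
        Monoid.Coprod (Multiplicative (ZMod 2)) (Multiplicative (ZMod 3))) :=
  ⟨(MulEquiv.ofBijective coprodToPSL2Z ⟨coprodToPSL2Z_injective, coprodToPSL2Z_surjective⟩).symm⟩
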